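/- Fix a power of two n, a power of two B dividing n, a parameter δ ∈ (0, 1/20), a parameter F' ≥ 10 log₂(1/δ), a signal Y ∈ ℂ^n, and an (n,B,F')-flat filter H. Let σ be uniform over the odd numbers in [n] and Δ uniform over [n], independently, and let U be the (n,B,H,σ,Δ)-hashing of Y, with Fourier transform Û. Then E_{σ,Δ}[ Σ_{b∈[B]} |Û_b|² ] ≤ 3·‖Ŷ‖₂². -/

import Mathlib

open Finset

/-- Discrete Fourier transform of a length-`n` signal, with `1/n` normalization. -/
noncomputable def dft (n : ℕ) [NeZero n] (X : ZMod n → ℂ) : ZMod n → ℂ :=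
  fun f => (n : ℂ)⁻¹ * ∑ t : ZMod n, X t *
    Complex.exp (-(2 * Real.pi * Complex.I) * ((f * t).val : ℂ) / (n : ℂ))

/-- Circular (modulo-`n`) distance of an index to `0`. -/
def cdist (n : ℕ) (x : ZMod n) : ℕ := min x.val (n - x.val)

/-- The (real) Fourier transform of a real-valued filter. -/
noncomputable def fhat (n : ℕ) [NeZero n] (G : ZMod n → ℝ) (f : ZMod n) : ℝ :=
  (dft n (fun t => ((G t : ℝ) : ℂ)) f).re

/-- `G` is an `(n,B,F)`-flat filter. -/
structure IsFlatFilter (n B F : ℕ) [NeZero n] (G : ZMod n → ℝ) : Prop where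
  realFT : ∀ f, (dft n (fun t => ((G t : ℝ) : ℂ)) f).im = 0
  symm : ∀ f, fhat n G (-f) = fhat n G f
  nonneg : ∀ f, 0 ≤ fhat n G f
  le_one : ∀ f, fhat n G f ≤ 1
  pass : ∀ f : ZMod n, (cdist n f : ℝ) ≤ (n : ℝ) / (2 * B) →
    1 - (1 / 4 : ℝ) ^ (F - 1) ≤ fhat n G f
  decay : ∀ f : ZMod n, (n : ℝ) / B ≤ (cdist n f : ℝ) →
    fhat n G f ≤ (1 / 4 : ℝ) ^ (F - 1) * ((n : ℝ) / (B * cdist n f)) ^ (F - 1)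

/-- The `(n,B,G,σ,Δ)`-hashing of `X`:
`U_j = (B/n) ∑_{i ∈ [n/B]} X_{σ(Δ+j+B·i)} G_{j+B·i}` for `j ∈ [B]`. -/
noncomputable def hashing (n B : ℕ) [NeZero (n / B)] (X G : ZMod n → ℂ)
    (σ Δ : ZMod n) : ZMod B → ℂ :=
  fun j => (B : ℂ) / (n : ℂ) * ∑ i : ZMod (n / B),
    X (σ * (Δ + (j.val : ZMod n) + (B : ZMod n) * (i.val : ZMod n))) *
      G ((j.val : ZMod n) + (B : ZMod n) * (i.val : ZMod n))

/-- The odd elements of `[n]` (values of the random variable `σ`). -/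
def odds (n : ℕ) [NeZero n] : Finset (ZMod n) :=
  Finset.univ.filter (fun σ : ZMod n => σ.val % 2 = 1)

/-! Expanding `Y` by Fourier inversion, the `b`-th coefficient of the hashing is
`Û_b = ∑_f Ŷ_f Ĥ((n/B)b - σf) e(σfΔ)`. For odd `σ` (a unit modulo the power of two `n`) the
frequencies `σf` are distinct, so Parseval in `Δ` gives
`∑_Δ |Û_b|² = n ∑_f |Ŷ_f|² Ĥ((n/B)b - σf)²`. For fixed `g` the points `(n/B)b - g`, `b ∈ [B]`,
are spaced `n/B` apart around the circle; labelling them `k = 0, …, B-1` from the first one at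
or after `0`, the `k`-th lies at circular distance at least `(n/B)·min(k, B-1-k)`, and the decay
of a flat filter with `F' ≥ 2` (forced by `δ < 1/20`) gives `Ĥ ≤ 1/(4m)` at distance `(n/B)m`. Hence
`∑_b Ĥ((n/B)b - g)² ≤ 2(1 + ∑_{m ≥ 1} 1/(16m²)) ≤ 3`. -/

open ZMod (stdAddChar stdAddChar_apply toCircle_apply invDFT_apply)
open scoped ZMod

section Fourier

variable {n : ℕ} [NeZero n]

lemma dft_eq_inv_mul_dft (X : ZMod n → ℂ) (f : ZMod n) :
    dft n X f = (n : ℂ)⁻¹ * 𝓕 X f := by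
  rw [dft, ZMod.dft_apply]
  congr 1
  refine sum_congr rfl fun t _ => ?_
  rw [smul_eq_mul, mul_comm, mul_comm t, AddChar.map_neg_eq_inv, stdAddChar_apply,
    toCircle_apply, ← Complex.exp_neg]
  ring_nf

lemma dft_apply_eq_sum (X : ZMod n → ℂ) (f : ZMod n) :
    dft n X f = (n : ℂ)⁻¹ * ∑ t, X t * stdAddChar (-(f * t)) := by
  rw [dft_eq_inv_mul_dft, ZMod.dft_apply]
  simp only [smul_eq_mul, mul_comm (X _), mul_comm _ f]

lemma eq_sum_dft_mul_stdAddChar (X : ZMod n → ℂ) (t : ZMod n) :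
    X t = ∑ f, dft n X f * stdAddChar (f * t) := by
  conv_lhs => rw [← (ZMod.dft (N := n) (E := ℂ)).symm_apply_apply X, invDFT_apply, smul_eq_mul,
    mul_sum]
  simp only [dft_eq_inv_mul_dft, smul_eq_mul]
  exact sum_congr rfl fun f _ => by ring

lemma sum_norm_sq_sum_mul_addChar {R ι : Type*} [CommRing R] [Fintype R] [DecidableEq R]
    [Fintype ι] [DecidableEq ι] {ψ : AddChar R ℂ} (hψ : ψ.IsPrimitive) {φ : ι → R}
    (hφ : Function.Injective φ) (c : ι → ℂ) :
    ∑ x, ‖∑ i, c i * ψ (φ i * x)‖ ^ 2 = Fintype.card R * ∑ i, ‖c i‖ ^ 2 := by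
  have orth (i j : ι) :
      ∑ x, ψ (x * (φ i - φ j)) = if i = j then (Fintype.card R : ℂ) else 0 := by
    rw [AddChar.sum_mulShift _ hψ]
    simp [sub_eq_zero, hφ.eq_iff]
  apply Complex.ofReal_injective
  push_cast
  simp_rw [← Complex.mul_conj', map_sum, map_mul, ← AddChar.map_neg_eq_conj, sum_mul_sum,
    mul_sum]
  rw [sum_comm]
  refine sum_congr rfl fun i _ => ?_
  rw [sum_comm]
  have inner (j : ι) : ∑ x, c i * ψ (φ i * x) * ((starRingEnd ℂ) (c j) * ψ (-(φ j * x))) =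
      c i * (starRingEnd ℂ) (c j) * ∑ x, ψ (x * (φ i - φ j)) := by
    rw [mul_sum]
    refine sum_congr rfl fun x _ => ?_
    rw [show x * (φ i - φ j) = φ i * x + -(φ j * x) by ring, AddChar.map_add_eq_mul]
    ring
  simp_rw [inner, orth, mul_ite, mul_zero, sum_ite_eq, if_pos (mem_univ _)]
  ring

end Fourier

section Hashing

variable {n B : ℕ} [NeZero n] [NeZero B] [NeZero (n / B)]

lemma bijective_val_add_mul_val (hBn : B ∣ n) :
    Function.Bijective fun p : ZMod B × ZMod (n / B) =>
      (p.1.val : ZMod n) + (B : ZMod n) * (p.2.val : ZMod n) := by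
  have lt (p : ZMod B × ZMod (n / B)) : p.1.val + B * p.2.val < n := by
    have := ZMod.val_lt p.2
    calc p.1.val + B * p.2.val < B + B * p.2.val := by linarith [ZMod.val_lt p.1]
      _ = B * (p.2.val + 1) := by ring
      _ ≤ B * (n / B) := Nat.mul_le_mul_left B this
      _ = n := Nat.mul_div_cancel' hBn
  rw [Fintype.bijective_iff_injective_and_card, Fintype.card_prod, ZMod.card, ZMod.card,
    ZMod.card, Nat.mul_div_cancel' hBn]
  refine ⟨fun p p' h => ?_, rfl⟩
  simp only at h
  have h' : p.1.val + B * p.2.val = p'.1.val + B * p'.2.val := by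
    have := congrArg ZMod.val h
    push_cast [← Nat.cast_mul, ← Nat.cast_add, ZMod.val_cast_of_lt (lt _)] at this
    exact this
  have divMod (p : ZMod B × ZMod (n / B)) :
      (p.1.val + B * p.2.val) / B = p.2.val ∧ (p.1.val + B * p.2.val) % B = p.1.val :=
    (Nat.div_mod_unique (Nat.pos_of_neZero B)).2 ⟨rfl, ZMod.val_lt p.1⟩
  refine Prod.ext (ZMod.val_injective _ ?_) (ZMod.val_injective _ ?_)
  · rw [← (divMod p).2, ← (divMod p').2, h']
  · rw [← (divMod p).1, ← (divMod p').1, h']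

lemma sum_eq_sum_sum_val_add_mul_val {M : Type*} [AddCommMonoid M] (hBn : B ∣ n)
    (F : ZMod n → M) :
    ∑ t, F t = ∑ j : ZMod B, ∑ i : ZMod (n / B),
      F ((j.val : ZMod n) + (B : ZMod n) * (i.val : ZMod n)) := by
  rw [← (bijective_val_add_mul_val hBn).sum_comp F, Fintype.sum_prod_type]

lemma stdAddChar_natCast_of_dvd (hBn : B ∣ n) (a : ℕ) :
    stdAddChar (a : ZMod B) = stdAddChar ((n / B * a : ℕ) : ZMod n) := by
  have hn : (n : ℂ) = B * (n / B : ℕ) := by exact_mod_cast (Nat.mul_div_cancel' hBn).symm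
  have hq : ((n / B : ℕ) : ℂ) ≠ 0 := Nat.cast_ne_zero.2 (NeZero.ne _)
  simp only [stdAddChar_apply, ZMod.toCircle_natCast, hn]
  push_cast
  field_simp

lemma stdAddChar_mul_eq_of_dvd (hBn : B ∣ n) (b j : ZMod B) (i : ZMod (n / B)) :
    stdAddChar (b * j) = stdAddChar (((n / B * b.val : ℕ) : ZMod n) *
      ((j.val : ZMod n) + (B : ZMod n) * (i.val : ZMod n))) := by
  have hqB : ((n / B : ℕ) : ZMod n) * B = 0 := by
    rw [← Nat.cast_mul, Nat.div_mul_cancel hBn, ZMod.natCast_self]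
  have hbj : b * j = ((b.val * j.val : ℕ) : ZMod B) := by simp
  rw [hbj, stdAddChar_natCast_of_dvd hBn]
  congr 1
  push_cast
  linear_combination -(b.val * i.val : ZMod n) * hqB

lemma dft_hashing (hBn : B ∣ n) (X G : ZMod n → ℂ) (σ Δ : ZMod n) (b : ZMod B) :
    dft B (hashing n B X G σ Δ) b = (n : ℂ)⁻¹ *
      ∑ t, X (σ * (Δ + t)) * G t * stdAddChar (-(((n / B * b.val : ℕ) : ZMod n) * t)) := by
  rw [dft_apply_eq_sum, sum_eq_sum_sum_val_add_mul_val hBn, mul_sum, mul_sum]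
  refine sum_congr rfl fun j _ => ?_
  rw [hashing, mul_sum, sum_mul, mul_sum, mul_sum]
  refine sum_congr rfl fun i _ => ?_
  rw [AddChar.map_neg_eq_inv, AddChar.map_neg_eq_inv, stdAddChar_mul_eq_of_dvd hBn b j i,
    add_assoc]
  have hB : (B : ℂ) ≠ 0 := Nat.cast_ne_zero.2 (NeZero.ne B)
  field_simp

lemma dft_hashing_eq_sum (hBn : B ∣ n) (X G : ZMod n → ℂ) (σ Δ : ZMod n) (b : ZMod B) :
    dft B (hashing n B X G σ Δ) b = ∑ f, dft n X f *
      dft n G (((n / B * b.val : ℕ) : ZMod n) - σ * f) * stdAddChar (σ * f * Δ) := by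
  rw [dft_hashing hBn]
  set m : ZMod n := ((n / B * b.val : ℕ) : ZMod n)
  have expand (t : ZMod n) : X (σ * (Δ + t)) * G t * stdAddChar (-(m * t)) =
      ∑ f, dft n X f * stdAddChar (σ * f * Δ) * (G t * stdAddChar (-((m - σ * f) * t))) := by
    rw [eq_sum_dft_mul_stdAddChar X (σ * (Δ + t)), sum_mul, sum_mul]
    refine sum_congr rfl fun f _ => ?_
    rw [show f * (σ * (Δ + t)) = σ * f * Δ + σ * f * t by ring,
      show -((m - σ * f) * t) = -(m * t) + σ * f * t by ring,
      AddChar.map_add_eq_mul, AddChar.map_add_eq_mul]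
    ring
  simp_rw [expand]
  rw [sum_comm, mul_sum]
  refine sum_congr rfl fun f _ => ?_
  rw [dft_apply_eq_sum G, ← mul_sum]
  ring

lemma sum_norm_sq_dft_hashing (hBn : B ∣ n) (X G : ZMod n → ℂ) {σ : ZMod n} (hσ : IsUnit σ)
    (b : ZMod B) :
    ∑ Δ, ‖dft B (hashing n B X G σ Δ) b‖ ^ 2 =
      n * ∑ f, ‖dft n X f‖ ^ 2 * ‖dft n G (((n / B * b.val : ℕ) : ZMod n) - σ * f)‖ ^ 2 := by
  simp_rw [dft_hashing_eq_sum hBn]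
  rw [sum_norm_sq_sum_mul_addChar (ZMod.isPrimitive_stdAddChar n) hσ.mul_right_injective,
    ZMod.card]
  simp only [norm_mul, mul_pow]

end Hashing

lemma sum_zmod_val_eq_sum_range {M : Type*} [AddCommMonoid M] {B : ℕ} [NeZero B]
    (F : ℕ → M) : ∑ b : ZMod B, F b.val = ∑ k ∈ range B, F k := by
  obtain ⟨B, rfl⟩ := Nat.exists_eq_succ_of_ne_zero (NeZero.ne B)
  exact Fin.sum_univ_eq_sum_range F _

section FlatFilter

noncomputable def tailBound (m : ℕ) : ℝ := if m = 0 then 1 else (16 * (m : ℝ) ^ 2)⁻¹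

lemma tailBound_nonneg (m : ℕ) : 0 ≤ tailBound m := by
  unfold tailBound; split_ifs <;> positivity

lemma sum_range_tailBound_le (N : ℕ) : ∑ k ∈ range N, tailBound k ≤ 9 / 8 := by
  rcases N.eq_zero_or_pos with rfl | hN
  · norm_num
  rw [range_eq_Ico, sum_eq_sum_Ico_succ_bot hN, Finset.Ico_add_one_left_eq_Ioo]
  have tail : ∑ k ∈ Ioo 0 N, tailBound k = 16⁻¹ * ∑ k ∈ Ioo 0 N, ((k : ℝ) ^ 2)⁻¹ := by
    rw [mul_sum]
    refine sum_congr rfl fun k hk => ?_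
    rw [tailBound, if_neg (mem_Ioo.1 hk).1.ne', mul_inv]
  have := sum_Ioo_inv_sq_le (α := ℝ) 0 N
  rw [tail, tailBound, if_pos rfl]
  norm_num at this ⊢
  linarith

lemma mul_min_le_cdist {n B : ℕ} (hBn : B ∣ n) {k r : ℕ} (hk : k < B) (hr : r < n / B) :
    n / B * min k (B - 1 - k) ≤ cdist n ((n / B * k + r : ℕ) : ZMod n) := by
  set q := n / B
  have hn : q * (B - 1 - k) + q * k + q = n := by
    rw [← mul_add, ← mul_add_one, show B - 1 - k + k + 1 = B by omega, Nat.div_mul_cancel hBn]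
  have hmin_le := Nat.mul_le_mul_left q (min_le_left k (B - 1 - k))
  have hmin_le' := Nat.mul_le_mul_left q (min_le_right k (B - 1 - k))
  rw [cdist, ZMod.val_cast_of_lt (by omega)]
  omega

variable {n B F : ℕ} [NeZero n] [NeZero B] {H : ZMod n → ℝ}

lemma fhat_sq_le_tailBound (hH : IsFlatFilter n B F H) (hF : 2 ≤ F) (hBn : B ∣ n) {m : ℕ}
    {f : ZMod n} (hf : n / B * m ≤ cdist n f) : fhat n H f ^ 2 ≤ tailBound m := by
  rcases m.eq_zero_or_pos with rfl | hm
  · rw [tailBound, if_pos rfl]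
    exact pow_le_one₀ (hH.nonneg f) (hH.le_one f)
  have hq : ((n / B : ℕ) : ℝ) = n / B := Nat.cast_div hBn (Nat.cast_ne_zero.2 (NeZero.ne B))
  have hm1 : (1 : ℝ) ≤ m := by exact_mod_cast hm
  have hqm : (n / B : ℝ) * m ≤ cdist n f := by rw [← hq]; exact_mod_cast hf
  have hB0 : (0 : ℝ) < B := Nat.cast_pos.2 (Nat.pos_of_neZero B)
  have hq0 : (0 : ℝ) < n / B := div_pos (Nat.cast_pos.2 (Nat.pos_of_neZero n)) hB0
  have hd : (0 : ℝ) < cdist n f := by nlinarith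
  set x : ℝ := n / (B * cdist n f)
  have hx0 : 0 ≤ x := by positivity
  have hxm : x ≤ 1 / m := by
    rw [div_le_div_iff₀ (by positivity) (by positivity), one_mul]
    rw [div_mul_eq_mul_div, div_le_iff₀' hB0] at hqm
    exact hqm
  have hx1 : x / 4 ≤ 1 := by
    have : 1 / (m : ℝ) ≤ 1 := by rw [div_le_one (by positivity)]; exact hm1
    linarith
  have decay : fhat n H f ≤ 1 / (4 * m) :=
    calc fhat n H f ≤ (1 / 4 : ℝ) ^ (F - 1) * x ^ (F - 1) :=
          hH.decay f (le_trans (le_mul_of_one_le_right hq0.le hm1) hqm)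
      _ = (x / 4) ^ (F - 1) := by rw [← mul_pow]; ring
      _ ≤ x / 4 := pow_le_of_le_one (by positivity) hx1 (by omega)
      _ ≤ 1 / m / 4 := by gcongr
      _ = 1 / (4 * m) := by ring
  calc fhat n H f ^ 2 ≤ (1 / (4 * m)) ^ 2 := pow_le_pow_left₀ (hH.nonneg f) decay 2
    _ = tailBound m := by rw [tailBound, if_neg hm.ne']; ring

lemma fhat_sq_le_tailBound_add (hH : IsFlatFilter n B F H) (hF : 2 ≤ F) (hBn : B ∣ n)
    {k r : ℕ} (hk : k < B) (hr : r < n / B) :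
    fhat n H ((n / B * k + r : ℕ) : ZMod n) ^ 2 ≤ tailBound k + tailBound (B - 1 - k) := by
  refine (fhat_sq_le_tailBound hH hF hBn (mul_min_le_cdist hBn hk hr)).trans ?_
  rcases min_choice k (B - 1 - k) with h | h <;> rw [h]
  · linarith [tailBound_nonneg (B - 1 - k)]
  · linarith [tailBound_nonneg k]

lemma sum_fhat_sq_le_three (hH : IsFlatFilter n B F H) (hF : 2 ≤ F) (hBn : B ∣ n)
    (g : ZMod n) : ∑ b : ZMod B, fhat n H (((n / B * b.val : ℕ) : ZMod n) - g) ^ 2 ≤ 3 := by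
  set q := n / B
  have hq : 0 < q :=
    Nat.div_pos (Nat.le_of_dvd (Nat.pos_of_neZero n) hBn) (Nat.pos_of_neZero B)
  set s := (-g).val / q
  set r := (-g).val % q
  have shift (b : ZMod B) :
      ((q * b.val : ℕ) : ZMod n) - g = ((q * (b + (s : ZMod B)).val + r : ℕ) : ZMod n) := by
    rw [ZMod.val_add, ZMod.val_natCast, Nat.add_mod_mod, ← Nat.mul_mod_mul_left,
      Nat.div_mul_cancel hBn, Nat.cast_add (R := ZMod n), ZMod.natCast_mod, sub_eq_add_neg,
      ← ZMod.natCast_zmod_val (-g), ← Nat.div_add_mod (-g).val q]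
    push_cast
    ring
  calc ∑ b : ZMod B, fhat n H (((q * b.val : ℕ) : ZMod n) - g) ^ 2
      = ∑ b : ZMod B, fhat n H ((q * (b + (s : ZMod B)).val + r : ℕ) : ZMod n) ^ 2 := by
        simp_rw [shift]
    _ = ∑ b : ZMod B, fhat n H ((q * b.val + r : ℕ) : ZMod n) ^ 2 :=
        Equiv.sum_comp (Equiv.addRight (s : ZMod B))
          fun b => fhat n H ((q * b.val + r : ℕ) : ZMod n) ^ 2
    _ ≤ ∑ b : ZMod B, (tailBound b.val + tailBound (B - 1 - b.val)) :=
        sum_le_sum fun b _ =>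
          fhat_sq_le_tailBound_add hH hF hBn (ZMod.val_lt b) (Nat.mod_lt _ hq)
    _ ≤ 3 := by
        rw [sum_zmod_val_eq_sum_range (fun k => tailBound k + tailBound (B - 1 - k)),
          sum_add_distrib, sum_range_reflect tailBound B]
        linarith [sum_range_tailBound_le B]

end FlatFilter

lemma isUnit_of_mem_odds {n : ℕ} [NeZero n] (hn : ∃ k, n = 2 ^ k) {σ : ZMod n}
    (hσ : σ ∈ odds n) : IsUnit σ := by
  obtain ⟨k, rfl⟩ := hn
  rw [← ZMod.natCast_zmod_val σ, ZMod.isUnit_iff_coprime]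
  exact (Nat.coprime_two_right.2 (Nat.odd_iff.2 (mem_filter.1 hσ).2)).pow_right k

lemma norm_sq_dft_ofReal {n : ℕ} [NeZero n] {H : ZMod n → ℝ} {f : ZMod n}
    (hre : (dft n (fun t => ((H t : ℝ) : ℂ)) f).im = 0) :
    ‖dft n (fun t => ((H t : ℝ) : ℂ)) f‖ ^ 2 = fhat n H f ^ 2 := by
  rw [Complex.sq_norm, Complex.normSq_apply, hre, fhat]
  ring

lemma sum_sum_norm_sq_dft_hashing_le {n B F : ℕ} [NeZero n] [NeZero B] [NeZero (n / B)]
    (hBn : B ∣ n) {H : ZMod n → ℝ} (hH : IsFlatFilter n B F H) (hF : 2 ≤ F) (Y : ZMod n → ℂ)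
    {σ : ZMod n} (hσ : IsUnit σ) :
    ∑ Δ, ∑ b : ZMod B, ‖dft B (hashing n B Y (fun t => ((H t : ℝ) : ℂ)) σ Δ) b‖ ^ 2 ≤
      n * (3 * ∑ f, ‖dft n Y f‖ ^ 2) := by
  rw [sum_comm]
  simp_rw [sum_norm_sq_dft_hashing hBn _ _ hσ, norm_sq_dft_ofReal (hH.realFT _)]
  rw [← mul_sum, sum_comm]
  gcongr
  rw [mul_sum]
  gcongr with f
  rw [← mul_sum, mul_comm]
  gcongr
  exact sum_fhat_sq_le_three hH hF hBn (σ * f)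

theorem exact_hashing_total_energy_general (n B F' : ℕ) [NeZero n] [NeZero B]
    [NeZero (n / B)]
    (hn : ∃ k, n = 2 ^ k) (hBn : B ∣ n)
    (δ : ℝ) (hδ : δ ∈ Set.Ioo (0 : ℝ) (1 / 20))
    (hF' : 10 * Real.logb 2 (1 / δ) ≤ (F' : ℝ))
    (Y : ZMod n → ℂ) (H : ZMod n → ℝ) (hH : IsFlatFilter n B F' H) :
    (((odds n).card : ℝ) * n)⁻¹ *
        ∑ σ ∈ odds n, ∑ Δ : ZMod n,
          ∑ b : ZMod B,
            ‖dft B (hashing n B Y (fun t => ((H t : ℝ) : ℂ)) σ Δ) b‖ ^ 2 ≤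
      3 * ∑ f : ZMod n, ‖dft n Y f‖ ^ 2 := by
  have hF : 2 ≤ F' := by
    have h2δ : (2 : ℝ) ≤ 1 / δ := by rw [le_div_iff₀ hδ.1]; linarith [hδ.2]
    have hlog : 1 ≤ Real.logb 2 (1 / δ) := by
      rw [Real.le_logb_iff_rpow_le one_lt_two (by linarith), Real.rpow_one]
      exact h2δ
    exact_mod_cast (show (2 : ℝ) ≤ F' by linarith)
  set E := 3 * ∑ f : ZMod n, ‖dft n Y f‖ ^ 2
  have hE : 0 ≤ E := by positivity
  have total := sum_le_card_nsmul (odds n) _ (n * E) fun σ hσ =>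
    sum_sum_norm_sq_dft_hashing_le hBn hH hF Y (isUnit_of_mem_odds hn hσ)
  rw [nsmul_eq_mul] at total
  -- `odds 1 = ∅`, and there the average is `0⁻¹ * 0 = 0`.
  rcases eq_or_ne ((odds n).card : ℝ) 0 with hc | hc
  · simp [hc, hE]
  have hn0 : (n : ℝ) ≠ 0 := Nat.cast_ne_zero.2 (NeZero.ne n)
  rw [inv_mul_le_iff₀ (by positivity)]
  linarith

/-- Exact hashing, part 2: for uniformly random odd `σ` and uniformly random `Δ`,
`E_{σ,Δ}[ ‖Û‖₂² ] ≤ 3‖Ŷ‖₂²`. -/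
theorem exact_hashing_total_energy (n B F' : ℕ) [NeZero n] [NeZero B]
    [NeZero (n / B)]
    (hn : ∃ k, n = 2 ^ k) (hB : ∃ k, B = 2 ^ k) (hBn : B ∣ n)
    (δ : ℝ) (hδ : δ ∈ Set.Ioo (0 : ℝ) (1 / 20))
    (hF' : 10 * Real.logb 2 (1 / δ) ≤ (F' : ℝ))
    (Y : ZMod n → ℂ) (H : ZMod n → ℝ) (hH : IsFlatFilter n B F' H) :
    (((odds n).card : ℝ) * n)⁻¹ *
        ∑ σ ∈ odds n, ∑ Δ : ZMod n,
          ∑ b : ZMod B,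
            ‖dft B (hashing n B Y (fun t => ((H t : ℝ) : ℂ)) σ Δ) b‖ ^ 2 ≤
      3 * ∑ f : ZMod n, ‖dft n Y f‖ ^ 2 :=
  exact_hashing_total_energy_general n B F' hn hBn δ hδ hF' Y H hH
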